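/- For any density operator ρ on a finite-dimensional Hilbert space H and any operator X with 0 ≤ X ≤ I, the trace norm distance satisfies ‖ρ − √X ρ √X‖₁ ≤ 2·√(Tr[ρ(I−X)]). -/

import Mathlib

open Matrix BigOperators Filter
open scoped ComplexOrder

noncomputable section

namespace QIT

variable {n : Type*} [Fintype n] [DecidableEq n]

/-- Trace norm of a matrix. -/
def traceNorm (A : Matrix n n ℂ) : ℝ :=
  ((((Matrix.posSemidef_conjTranspose_mul_self A).1.eigenvectorUnitary : Matrix n n ℂ) *
      Matrix.diagonal (((↑) : ℝ → ℂ) ∘ (√·) ∘ (Matrix.posSemidef_conjTranspose_mul_self A).1.eigenvalues) *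
      (star (Matrix.posSemidef_conjTranspose_mul_self A).1.eigenvectorUnitary : Matrix n n ℂ)).trace).re

/-- Functional calculus for Hermitian matrices (junk value 0 otherwise). -/
def funCalc (A : Matrix n n ℂ) (f : ℝ → ℝ) : Matrix n n ℂ :=
  if h : A.IsHermitian then
    (h.eigenvectorUnitary : Matrix n n ℂ) *
      Matrix.diagonal (fun i => (f (h.eigenvalues i) : ℂ)) *
      (star (h.eigenvectorUnitary : Matrix n n ℂ))
  else 0

/-- Positive square root of a (psd) matrix. -/
def msqrt (A : Matrix n n ℂ) : Matrix n n ℂ := funCalc A Real.sqrt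

/-- Matrix logarithm on the support. -/
def mlog (A : Matrix n n ℂ) : Matrix n n ℂ := funCalc A Real.log

/-- Matrix real power on the support. -/
def mpow (A : Matrix n n ℂ) (s : ℝ) : Matrix n n ℂ := funCalc A (fun x => x ^ s)

/-- Projection onto the strictly positive eigenspaces `{A > 0}`. -/
def projPos (A : Matrix n n ℂ) : Matrix n n ℂ := funCalc A (fun x => if 0 < x then 1 else 0)

/-- Projection onto the nonpositive eigenspaces `{A ≤ 0}`. -/
def projNonpos (A : Matrix n n ℂ) : Matrix n n ℂ := funCalc A (fun x => if x ≤ 0 then 1 else 0)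

/-- The pinching map `E_A(B) = ∑ₐ Pₐ B Pₐ` with respect to the spectral
projections of a Hermitian matrix `A` (junk value `B` otherwise). -/
def pinch (A B : Matrix n n ℂ) : Matrix n n ℂ :=
  if h : A.IsHermitian then
    ∑ i : n, ∑ j : n,
      if h.eigenvalues i = h.eigenvalues j then
        ((h.eigenvectorUnitary : Matrix n n ℂ) *
            Matrix.diagonal (fun k => if k = i then (1:ℂ) else 0) *
            (star (h.eigenvectorUnitary : Matrix n n ℂ))) * B *
        ((h.eigenvectorUnitary : Matrix n n ℂ) *
            Matrix.diagonal (fun k => if k = j then (1:ℂ) else 0) *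
            (star (h.eigenvectorUnitary : Matrix n n ℂ)))
      else 0
  else B

/-- Quantum relative entropy `D(ρ‖σ) = Tr[ρ(log ρ − log σ)]`. -/
def relEnt (ρ σ : Matrix n n ℂ) : ℝ := ((ρ * (mlog ρ - mlog σ)).trace).re

/-- von Neumann entropy `H(ρ) = −Tr[ρ log ρ]`. -/
def vnEntropy (ρ : Matrix n n ℂ) : ℝ := -((ρ * mlog ρ).trace).re

/-- Density operator predicate. -/
def IsDensity (ρ : Matrix n n ℂ) : Prop := ρ.PosSemidef ∧ ρ.trace = 1

/-- `n`-fold tensor power of a matrix. -/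
def tensorPow (ρ : Matrix n n ℂ) (N : ℕ) : Matrix (Fin N → n) (Fin N → n) ℂ :=
  Matrix.of fun f g => ∏ i, ρ (f i) (g i)

/-- Tensor product `ρ_{x₁} ⊗ ⋯ ⊗ ρ_{xₙ}` of channel outputs along a word. -/
def chanTensor {X : Type*} (ρ : X → Matrix n n ℂ) {N : ℕ} (xn : Fin N → X) :
    Matrix (Fin N → n) (Fin N → n) ℂ :=
  Matrix.of fun f g => ∏ i, ρ (xn i) (f i) (g i)

end QIT


namespace QIT

variable {n : Type*} [Fintype n] [DecidableEq n]

section FC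

variable {A : Matrix n n ℂ} {f g : ℝ → ℝ}

lemma funCalc_def (hA : A.IsHermitian) (f : ℝ → ℝ) : funCalc A f =
    (hA.eigenvectorUnitary : Matrix n n ℂ) *
      Matrix.diagonal (fun i => (f (hA.eigenvalues i) : ℂ)) *
      (star (hA.eigenvectorUnitary : Matrix n n ℂ)) := by
  rw [funCalc, dif_pos hA]

lemma funCalc_eq_cfc (hA : A.IsHermitian) (f : ℝ → ℝ) : funCalc A f = cfc f A := by
  rw [hA.cfc_eq, IsHermitian.cfc, funCalc_def hA]
  simp [Unitary.conjStarAlgAut_apply, Function.comp_def]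

lemma funCalc_mul (hA : A.IsHermitian) (f g : ℝ → ℝ) : funCalc A f * funCalc A g = funCalc A (fun x => f x * g x) := by
  rw [funCalc_def hA f, funCalc_def hA g, funCalc_def hA]
  have h1 : (star (hA.eigenvectorUnitary : Matrix n n ℂ)) *
      (hA.eigenvectorUnitary : Matrix n n ℂ) = 1 :=
    mem_unitaryGroup_iff'.mp hA.eigenvectorUnitary.2
  have h2 : (hA.eigenvectorUnitary : Matrix n n ℂ) *
      Matrix.diagonal (fun i => (f (hA.eigenvalues i) : ℂ)) *
      (star (hA.eigenvectorUnitary : Matrix n n ℂ)) *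
      ((hA.eigenvectorUnitary : Matrix n n ℂ) *
      Matrix.diagonal (fun i => (g (hA.eigenvalues i) : ℂ)) *
      (star (hA.eigenvectorUnitary : Matrix n n ℂ))) =
      (hA.eigenvectorUnitary : Matrix n n ℂ) *
      (Matrix.diagonal (fun i => (f (hA.eigenvalues i) : ℂ)) *
      (((star (hA.eigenvectorUnitary : Matrix n n ℂ)) *
      (hA.eigenvectorUnitary : Matrix n n ℂ)) *
      Matrix.diagonal (fun i => (g (hA.eigenvalues i) : ℂ)))) *
      (star (hA.eigenvectorUnitary : Matrix n n ℂ)) := by noncomm_ring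
  rw [h2, h1, Matrix.one_mul, Matrix.diagonal_mul_diagonal]
  simp only [← Complex.ofReal_mul]

lemma funCalc_one (hA : A.IsHermitian) : funCalc A (fun _ => 1) = 1 := by
  rw [funCalc_def hA]
  simp [Matrix.diagonal_one, mem_unitaryGroup_iff.mp hA.eigenvectorUnitary.2]

lemma funCalc_id (hA : A.IsHermitian) : funCalc A (fun x => x) = A := by
  rw [funCalc_def hA]; exact hA.spectral_theorem.symm

lemma funCalc_sub (hA : A.IsHermitian) (f g : ℝ → ℝ) : funCalc A (fun x => f x - g x) = funCalc A f - funCalc A g := by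
  rw [funCalc_def hA, funCalc_def hA, funCalc_def hA]
  rw [← Matrix.sub_mul, ← Matrix.mul_sub, Matrix.diagonal_sub]
  push_cast
  rfl

lemma funCalc_congr (hA : A.IsHermitian) (f g : ℝ → ℝ) (h : ∀ i, f (hA.eigenvalues i) = g (hA.eigenvalues i)) :
    funCalc A f = funCalc A g := by
  rw [funCalc_def hA, funCalc_def hA]
  have : (fun i => (f (hA.eigenvalues i) : ℂ)) = fun i => (g (hA.eigenvalues i) : ℂ) := by
    funext i; rw [h i]
  rw [this]

lemma funCalc_isHermitian (hA : A.IsHermitian) (f : ℝ → ℝ) : (funCalc A f).IsHermitian := by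
  rw [funCalc_def hA]
  have hD : (Matrix.diagonal (fun i => (f (hA.eigenvalues i) : ℂ))).IsHermitian := by
    refine Matrix.isHermitian_diagonal_of_self_adjoint _ ?_
    ext i
    simp [Pi.star_def, Complex.star_def, Complex.conj_ofReal]
  have := Matrix.isHermitian_mul_mul_conjTranspose
    (hA.eigenvectorUnitary : Matrix n n ℂ) hD
  simpa [Matrix.star_eq_conjTranspose, Matrix.mul_assoc] using this

lemma funCalc_posSemidef (hA : A.IsHermitian) (f : ℝ → ℝ) (h : ∀ i, 0 ≤ f (hA.eigenvalues i)) :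
    (funCalc A f).PosSemidef := by
  rw [funCalc_def hA]
  have : (Matrix.diagonal (fun i => (f (hA.eigenvalues i) : ℂ))).PosSemidef := by
    refine posSemidef_diagonal_iff.mpr fun i => ?_
    exact_mod_cast Complex.zero_le_real.mpr (h i)
  rw [Matrix.star_eq_conjTranspose]
  exact this.mul_mul_conjTranspose_same (hA.eigenvectorUnitary : Matrix n n ℂ)

lemma funCalc_trace (hA : A.IsHermitian) (f : ℝ → ℝ) : (funCalc A f).trace = ∑ i, (f (hA.eigenvalues i) : ℂ) := by
  rw [funCalc_def hA, Matrix.trace_mul_cycle,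
    mem_unitaryGroup_iff'.mp hA.eigenvectorUnitary.2,
    Matrix.one_mul, Matrix.trace_diagonal]

end FC


section TraceFacts

variable {A B : Matrix n n ℂ}

lemma trace_conjTranspose_mul_self_re_nonneg (M : Matrix n n ℂ) :
    0 ≤ (Mᴴ * M).trace.re := by
  rw [Matrix.trace]
  rw [Complex.re_sum]
  refine Finset.sum_nonneg fun i _ => ?_
  rw [Matrix.diag_apply, Matrix.mul_apply, Complex.re_sum]
  refine Finset.sum_nonneg fun j _ => ?_
  rw [Matrix.conjTranspose_apply]
  simp [Complex.star_def, Complex.mul_re]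
  nlinarith [sq_nonneg (M j i).re, sq_nonneg (M j i).im]

lemma trace_psd_re_nonneg (hA : A.PosSemidef) : 0 ≤ A.trace.re := by
  exact (Complex.nonneg_iff.mp hA.trace_nonneg).1

lemma trace_mul_psd_re_nonneg (hA : A.PosSemidef) (hB : B.PosSemidef) :
    0 ≤ (A * B).trace.re := by
  set S := funCalc A Real.sqrt with hSdef
  have hSS : S * S = A := by
    rw [hSdef, funCalc_mul hA.1, funCalc_congr hA.1 _ (fun x => x)
      (fun i => Real.mul_self_sqrt (hA.eigenvalues_nonneg i)), funCalc_id hA.1]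
  have h1 : (A * B).trace = (S * B * S).trace := by
    rw [← hSS, Matrix.mul_assoc, Matrix.mul_assoc, Matrix.trace_mul_comm S,
      Matrix.mul_assoc]
  rw [h1]
  have := hB.mul_mul_conjTranspose_same S
  rw [(funCalc_isHermitian hA.1 Real.sqrt).eq] at this
  exact trace_psd_re_nonneg this

/-- Monotonicity of `Re Tr(ρ ·)` for psd `ρ`. -/
lemma trace_mul_mono (hρ : A.PosSemidef) {M N : Matrix n n ℂ}
    (h : (N - M).PosSemidef) : (A * M).trace.re ≤ (A * N).trace.re := by
  have h0 : 0 ≤ (A * (N - M)).trace.re := trace_mul_psd_re_nonneg hρ h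
  rw [Matrix.mul_sub, Matrix.trace_sub, Complex.sub_re] at h0
  linarith

/-- Cauchy–Schwarz for the Frobenius inner product. -/
lemma trace_cs (M N : Matrix n n ℂ) :
    ‖(Mᴴ * N).trace‖ ≤
      Real.sqrt ((Mᴴ * M).trace.re) * Real.sqrt ((Nᴴ * N).trace.re) := by
  classical
  let a : EuclideanSpace ℂ (n × n) := WithLp.toLp 2 (fun p : n × n => M p.2 p.1)
  let b : EuclideanSpace ℂ (n × n) := WithLp.toLp 2 (fun p : n × n => N p.2 p.1)
  have htr : ∀ P Q : Matrix n n ℂ, (Pᴴ * Q).trace =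
      ∑ p : n × n, (starRingEnd ℂ) (P p.2 p.1) * Q p.2 p.1 := by
    intro P Q
    rw [Matrix.trace]
    rw [Fintype.sum_prod_type]
    refine Finset.sum_congr rfl fun i _ => ?_
    rw [Matrix.diag_apply, Matrix.mul_apply]
    refine Finset.sum_congr rfl fun j _ => ?_
    rw [Matrix.conjTranspose_apply]
    rfl
  have hinner : (Mᴴ * N).trace = inner ℂ a b := by
    rw [htr]
    rw [PiLp.inner_apply]
    refine Finset.sum_congr rfl fun p _ => ?_
    simp [a, b, RCLike.inner_apply, mul_comm]
  have hnormM : Real.sqrt ((Mᴴ * M).trace.re) = ‖a‖ := by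
    rw [EuclideanSpace.norm_eq]
    congr 1
    rw [htr, Complex.re_sum]
    refine Finset.sum_congr rfl fun p _ => ?_
    rw [← Complex.normSq_eq_conj_mul_self, Complex.ofReal_re, ← Complex.sq_norm]
  have hnormN : Real.sqrt ((Nᴴ * N).trace.re) = ‖b‖ := by
    rw [EuclideanSpace.norm_eq]
    congr 1
    rw [htr, Complex.re_sum]
    refine Finset.sum_congr rfl fun p _ => ?_
    rw [← Complex.normSq_eq_conj_mul_self, Complex.ofReal_re, ← Complex.sq_norm]
  rw [hinner, hnormM, hnormN]
  exact norm_inner_le_norm a b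

end TraceFacts


section Eig

variable {A : Matrix n n ℂ}

lemma eigenvalues_le_one (hA : A.IsHermitian)
    (h1 : ((1 : Matrix n n ℂ) - A).PosSemidef) (i : n) : hA.eigenvalues i ≤ 1 := by
  classical
  have hP : (funCalc A (fun t => if t = hA.eigenvalues i then 1 else 0)).PosSemidef :=
    funCalc_posSemidef hA _ (fun j => by split <;> norm_num)
  have hone : (1 : Matrix n n ℂ) - A = funCalc A (fun t => 1 - t) := by
    rw [funCalc_sub hA, funCalc_one hA, funCalc_id hA]
  have h0 := trace_mul_psd_re_nonneg h1 hP
  rw [hone, funCalc_mul hA, funCalc_trace hA, Complex.re_sum] at h0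
  simp only [Complex.ofReal_re] at h0
  have hsum : ∑ j, ((1 - hA.eigenvalues j) *
        (if hA.eigenvalues j = hA.eigenvalues i then (1:ℝ) else 0)) =
      ((Finset.univ.filter (fun j => hA.eigenvalues j = hA.eigenvalues i)).card : ℝ) *
        (1 - hA.eigenvalues i) := by
    simp only [mul_ite, mul_one, mul_zero]
    rw [← Finset.sum_filter]
    rw [Finset.sum_congr rfl
      (g := fun _ => 1 - hA.eigenvalues i)
      (fun j hj => by rw [(Finset.mem_filter.mp hj).2])]
    rw [Finset.sum_const, nsmul_eq_mul]
  rw [hsum] at h0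
  have hcard : 0 < (((Finset.univ.filter
      (fun j => hA.eigenvalues j = hA.eigenvalues i)).card : ℕ) : ℝ) := by
    have hi : i ∈ Finset.univ.filter (fun j => hA.eigenvalues j = hA.eigenvalues i) := by simp
    exact_mod_cast Finset.card_pos.mpr ⟨i, hi⟩
  by_contra hgt
  push_neg at hgt
  have := mul_neg_of_pos_of_neg hcard (by linarith : 1 - hA.eigenvalues i < 0)
  linarith

lemma sqrt_conjTranspose_mul_self_eq (hD : A.IsHermitian) :
    funCalc (Aᴴ * A) Real.sqrt =
      funCalc A (fun t => |t|) := by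
  have hM : (Aᴴ * A).IsHermitian := (posSemidef_conjTranspose_mul_self A).1
  have h2 : Aᴴ * A = cfc (fun t : ℝ => t * t) A := by
    rw [← funCalc_eq_cfc hD, ← funCalc_mul hD, funCalc_id hD, hD.eq]
  rw [funCalc_eq_cfc hM, funCalc_eq_cfc hD, h2, ← cfc_comp' Real.sqrt (fun t : ℝ => t * t) A]
  congr 1
  funext t
  exact Real.sqrt_mul_self_eq_abs t

lemma traceNorm_hermitian (hD : A.IsHermitian) :
    traceNorm A = ∑ i, |hD.eigenvalues i| := by
  have hM : (Aᴴ * A).IsHermitian := (posSemidef_conjTranspose_mul_self A).1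
  have hT : traceNorm A = (funCalc (Aᴴ * A) Real.sqrt).trace.re := by
    rw [traceNorm, funCalc_def hM]; rfl
  rw [hT, sqrt_conjTranspose_mul_self_eq hD, funCalc_trace hD, Complex.re_sum]
  simp

end Eig

end QIT

/-- Winter's gentle measurement lemma: for a density operator ρ and 0 ≤ X ≤ I,
‖ρ − √X ρ √X‖₁ ≤ 2√(Tr[ρ(I−X)]). -/
theorem gentle_measurement {n : Type*} [Fintype n] [DecidableEq n]
    (ρ X : Matrix n n ℂ) (hρ : QIT.IsDensity ρ)
    (hX : X.PosSemidef) (hXI : ((1 : Matrix n n ℂ) - X).PosSemidef) :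
    QIT.traceNorm (ρ - QIT.msqrt X * ρ * QIT.msqrt X) ≤
      2 * Real.sqrt ((ρ * ((1 : Matrix n n ℂ) - X)).trace.re) := by
  classical
  obtain ⟨hρpsd, hρtr⟩ := hρ
  have hXh : X.IsHermitian := hX.1
  have hρh : ρ.IsHermitian := hρpsd.1
  have hev0 : ∀ i, 0 ≤ hXh.eigenvalues i := hX.eigenvalues_nonneg
  have hev1 : ∀ i, hXh.eigenvalues i ≤ 1 := QIT.eigenvalues_le_one hXh hXI
  obtain ⟨S, hSfun⟩ : ∃ S : Matrix n n ℂ, S = QIT.funCalc X Real.sqrt := ⟨_, rfl⟩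
  rw [show QIT.msqrt X = S from hSfun.symm]
  have hSh : S.IsHermitian := hSfun ▸ QIT.funCalc_isHermitian hXh _
  have hSS : S * S = X := by
    rw [hSfun, QIT.funCalc_mul hXh,
      QIT.funCalc_congr hXh _ (fun x => x) (fun i => Real.mul_self_sqrt (hev0 i)),
      QIT.funCalc_id hXh]
  obtain ⟨T, hTdef⟩ : ∃ T : Matrix n n ℂ, T = 1 - S := ⟨_, rfl⟩
  have hTfun : T = QIT.funCalc X (fun t => 1 - Real.sqrt t) := by
    rw [hTdef, QIT.funCalc_sub hXh (fun _ => 1) Real.sqrt, QIT.funCalc_one hXh, hSfun]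
  have hTh : T.IsHermitian := hTfun ▸ QIT.funCalc_isHermitian hXh _
  have hKey : (((1 : Matrix n n ℂ) - X) - T * T).PosSemidef := by
    have heq : ((1 : Matrix n n ℂ) - X) - T * T =
        QIT.funCalc X (fun t => (1 - t) - (1 - Real.sqrt t) * (1 - Real.sqrt t)) := by
      rw [QIT.funCalc_sub hXh (fun t => 1 - t)
        (fun t => (1 - Real.sqrt t) * (1 - Real.sqrt t)),
        QIT.funCalc_sub hXh (fun _ => 1) (fun t => t), QIT.funCalc_one hXh,
        QIT.funCalc_id hXh, ← QIT.funCalc_mul hXh, ← hTfun]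
    rw [heq]
    refine QIT.funCalc_posSemidef hXh _ (fun i => ?_)
    have h0 := hev0 i
    have h1 := hev1 i
    have hs0 := Real.sqrt_nonneg (hXh.eigenvalues i)
    have hs1 : Real.sqrt (hXh.eigenvalues i) ≤ 1 := Real.sqrt_le_one.mpr h1
    have hs2 : Real.sqrt (hXh.eigenvalues i) ^ 2 = hXh.eigenvalues i :=
      Real.sq_sqrt h0
    nlinarith
  obtain ⟨Δ, hΔdef⟩ : ∃ D : Matrix n n ℂ, D = ρ - S * ρ * S := ⟨_, rfl⟩
  rw [← hΔdef]
  have hΔh : Δ.IsHermitian := by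
    unfold Matrix.IsHermitian
    rw [hΔdef]
    simp only [Matrix.conjTranspose_sub, Matrix.conjTranspose_mul, hρh.eq, hSh.eq,
      Matrix.mul_assoc]
  obtain ⟨C, hCdef⟩ : ∃ C : Matrix n n ℂ, C = QIT.funCalc Δ (fun t => if 0 ≤ t then 1 else -1) := ⟨_, rfl⟩
  have hCh : C.IsHermitian := hCdef ▸ QIT.funCalc_isHermitian hΔh _
  have hCC : C * C = 1 := by
    rw [hCdef, QIT.funCalc_mul hΔh,
      QIT.funCalc_congr hΔh _ (fun _ => 1) (fun i => by split <;> norm_num),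
      QIT.funCalc_one hΔh]
  -- trace norm as a trace against the sign matrix
  have htn : QIT.traceNorm Δ = ((Δ * C).trace).re := by
    rw [QIT.traceNorm_hermitian hΔh]
    have hDC : Δ * C = QIT.funCalc Δ (fun t => |t|) := by
      conv_lhs => rw [← QIT.funCalc_id hΔh, hCdef]
      rw [QIT.funCalc_mul hΔh]
      refine QIT.funCalc_congr hΔh _ _ (fun i => ?_)
      split
      · rw [mul_one, abs_of_nonneg ‹_›]
      · rw [mul_neg_one, abs_of_neg (lt_of_not_ge ‹_›)]
    rw [hDC, QIT.funCalc_trace hΔh, Complex.re_sum]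
    simp
  obtain ⟨R, hRh, hRR⟩ : ∃ R : Matrix n n ℂ, R.IsHermitian ∧ R * R = ρ :=
    ⟨QIT.funCalc ρ Real.sqrt, QIT.funCalc_isHermitian hρh _, by
      rw [QIT.funCalc_mul hρh, QIT.funCalc_congr hρh _ (fun x => x)
        (fun i => Real.mul_self_sqrt (hρpsd.eigenvalues_nonneg i)), QIT.funCalc_id hρh]⟩
  set w : ℝ := ((ρ * ((1 : Matrix n n ℂ) - X)).trace).re with hwdef
  have hw1 : ((ρ * (T * T)).trace).re ≤ w := QIT.trace_mul_mono hρpsd hKey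
  have hρtrre : ρ.trace.re = 1 := by rw [hρtr]; rfl
  -- the (T*R) factor
  have hNN : (((T * R)ᴴ * (T * R)).trace) = ((ρ * (T * T)).trace) := by
    have h1 : (T * R)ᴴ * (T * R) = R * (T * (T * R)) := by
      rw [Matrix.conjTranspose_mul, hRh.eq, hTh.eq]; noncomm_ring
    rw [h1, Matrix.trace_mul_comm]
    have h2 : (T * (T * R)) * R = (T * T) * ρ := by rw [← hRR]; noncomm_ring
    rw [h2, Matrix.trace_mul_comm]
  have hNNw : (((T * R)ᴴ * (T * R)).trace).re ≤ w := by rw [hNN]; exact hw1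
  have hsqNN : Real.sqrt ((((T * R)ᴴ * (T * R)).trace).re) ≤ Real.sqrt w :=
    Real.sqrt_le_sqrt hNNw
  -- first term : Tr(TρC)
  have e1 : ((T * ρ * C).trace).re ≤ Real.sqrt w := by
    have htr : (T * ρ * C).trace = ((C * R)ᴴ * (T * R)).trace := by
      have h1 : (C * R)ᴴ * (T * R) = R * (C * (T * R)) := by
        rw [Matrix.conjTranspose_mul, hRh.eq, hCh.eq]; noncomm_ring
      have h2 : (C * (T * R)) * R = C * (T * ρ) := by rw [← hRR]; noncomm_ring
      conv_rhs => rw [h1, Matrix.trace_mul_comm, h2, Matrix.trace_mul_comm]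
    have hMM : (C * R)ᴴ * (C * R) = ρ := by
      rw [Matrix.conjTranspose_mul, hRh.eq, hCh.eq, ← hRR]
      calc R * C * (C * R) = R * (C * C) * R := by noncomm_ring
        _ = R * R := by rw [hCC, Matrix.mul_one]
    have hcs := QIT.trace_cs (C * R) (T * R)
    rw [hMM, hρtrre, Real.sqrt_one, one_mul] at hcs
    calc ((T * ρ * C).trace).re ≤ ‖(T * ρ * C).trace‖ :=
          Complex.re_le_norm _
      _ = ‖((C * R)ᴴ * (T * R)).trace‖ := by rw [htr]
      _ ≤ Real.sqrt ((((T * R)ᴴ * (T * R)).trace).re) := hcs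
      _ ≤ Real.sqrt w := hsqNN
  -- second term : Tr(SρTC)
  have e2 : ((S * ρ * T * C).trace).re ≤ Real.sqrt w := by
    have htr : (S * ρ * T * C).trace = ((T * R)ᴴ * (C * (S * R))).trace := by
      have h1 : (T * R)ᴴ * (C * (S * R)) = R * (T * (C * (S * R))) := by
        rw [Matrix.conjTranspose_mul, hRh.eq, hTh.eq]; noncomm_ring
      have h2 : (T * (C * (S * R))) * R = (T * C) * (S * ρ) := by
        rw [← hRR]; noncomm_ring
      conv_rhs => rw [h1, Matrix.trace_mul_comm, h2, Matrix.trace_mul_comm]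
      congr 1
      noncomm_ring
    have hMM : (C * (S * R))ᴴ * (C * (S * R)) = R * X * R := by
      rw [Matrix.conjTranspose_mul, Matrix.conjTranspose_mul, hRh.eq, hSh.eq, hCh.eq]
      calc R * S * C * (C * (S * R)) = R * S * (C * C) * (S * R) := by noncomm_ring
        _ = R * S * (S * R) := by rw [hCC, Matrix.mul_one]
        _ = R * (S * S) * R := by noncomm_ring
        _ = R * X * R := by rw [hSS]
    have hXρ : ((R * X * R).trace).re ≤ 1 := by
      have h2 : (R * X * R).trace = (ρ * X).trace := by
        have ha : R * X * R = R * (X * R) := by noncomm_ring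
        have hb : (X * R) * R = X * ρ := by rw [← hRR]; noncomm_ring
        rw [ha, Matrix.trace_mul_comm, hb, Matrix.trace_mul_comm]
      have h3 : ((ρ * X).trace).re ≤ ((ρ * 1).trace).re :=
        QIT.trace_mul_mono hρpsd (by simpa using hXI)
      rw [h2]
      rw [Matrix.mul_one] at h3
      linarith [h3, hρtrre.le, hρtrre.ge]
    have hcs := QIT.trace_cs (T * R) (C * (S * R))
    rw [hMM] at hcs
    have hsq1 : Real.sqrt (((R * X * R).trace).re) ≤ 1 := by
      rw [show (1:ℝ) = Real.sqrt 1 by rw [Real.sqrt_one]]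
      exact Real.sqrt_le_sqrt hXρ
    calc ((S * ρ * T * C).trace).re ≤ ‖(S * ρ * T * C).trace‖ :=
          Complex.re_le_norm _
      _ = ‖((T * R)ᴴ * (C * (S * R))).trace‖ := by rw [htr]
      _ ≤ Real.sqrt ((((T * R)ᴴ * (T * R)).trace).re) *
            Real.sqrt (((R * X * R).trace).re) := hcs
      _ ≤ Real.sqrt w * 1 := by
          refine mul_le_mul hsqNN hsq1 (Real.sqrt_nonneg _) (Real.sqrt_nonneg _)
      _ = Real.sqrt w := mul_one _
  -- assemble
  have hdec : Δ * C = T * ρ * C + S * ρ * T * C := by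
    rw [hΔdef, hTdef]
    noncomm_ring
  have : QIT.traceNorm Δ ≤ 2 * Real.sqrt w := by
    rw [htn, hdec, Matrix.trace_add, Complex.add_re]
    linarith
  exact this
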